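/- arXiv:2411.19364 — 2 statements merged into one kernel-verified Lean document; each statement's English description precedes it below -/
import Mathlib

section
/- For every integer m ≥ 0, one has m + 19 ≤ ‖2^m · 10^5‖₂ ≤ m + 20. -/
/-!
Every representation of `n` by `p` twos satisfies an invariant `Tame n p`: either
`16 n ≤ 5 · 2 ^ p`, or `n = 2 ^ k d` where the odd part `d` is generated from `1` by products
and by `d ↦ 2 ^ j d + 1`, at a cost `m` with `k + m ≤ p`. Products preserve the invariant
directly; in a sum, summands `2` and `4` are absorbed by `d ↦ 2 ^ j d + 1`, while two
summands larger than `4` land in the first alternative.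

For `2 ^ m · 10 ^ 5 = 2 ^ (m + 5) · 3125` the first alternative forces `p ≥ m + 19`, and the
second one `p ≥ m + 5 + 14`, because generating `3125 = 5 ^ 5` costs at least `14`; this is
checked by following the powers of `5` through the generation. The upper bound comes from
`10 = 2 + 2 · (2 · 2)`.
-/

/-- `CanRepr l n m` means `n` can be expressed using exactly `m` copies of `l`
    combined with addition and multiplication (and parentheses). -/
inductive CanRepr (l : ℕ) : ℕ → ℕ → Prop
  | base : CanRepr l l 1
  | add {a b p q : ℕ} : CanRepr l a p → CanRepr l b q → CanRepr l (a + b) (p + q)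
  | mul {a b p q : ℕ} : CanRepr l a p → CanRepr l b q → CanRepr l (a * b) (p + q)

/-- The `l`-complexity `‖n‖_l`: the minimal number of `l`'s needed to express `n`
    using only addition and multiplication. (By convention `sInf ∅ = 0`.) -/
noncomputable def complexity (l n : ℕ) : ℕ := sInf {m | CanRepr l n m}

theorem CanRepr.dvd {l n p : ℕ} (h : CanRepr l n p) : l ∣ n := by
  induction h with
  | base => exact dvd_rfl
  | add _ _ ha hb => exact dvd_add ha hb
  | mul _ _ ha _ => exact ha.mul_right _

theorem CanRepr.le {l n p : ℕ} (h : CanRepr l n p) : l ≤ n := by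
  induction h with
  | base => exact le_rfl
  | add _ _ ha _ => omega
  | mul _ _ ha hb =>
    rcases Nat.eq_zero_or_pos l with rfl | hl
    · exact Nat.zero_le _
    · exact ha.trans (Nat.le_mul_of_pos_right _ (hl.trans_le hb))

theorem CanRepr.base_pow_mul {l n p : ℕ} (h : CanRepr l n p) (k : ℕ) :
    CanRepr l (l ^ k * n) (k + p) := by
  induction k with
  | zero => simpa using h
  | succ k ih => convert CanRepr.mul .base ih using 1 <;> ring

theorem CanRepr.pow {l n p : ℕ} (h : CanRepr l n p) (k : ℕ) :
    CanRepr l (n ^ (k + 1)) ((k + 1) * p) := by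
  induction k with
  | zero => simpa using h
  | succ k ih => convert CanRepr.mul ih h using 1 <;> ring

theorem complexity_le {l n p : ℕ} (h : CanRepr l n p) : complexity l n ≤ p :=
  Nat.sInf_le h

theorem le_complexity {l n p c : ℕ} (h : CanRepr l n p) (hc : ∀ q, CanRepr l n q → c ≤ q) :
    c ≤ complexity l n :=
  hc _ (Nat.sInf_mem ⟨p, h⟩)

theorem padicValNat_two_pow_mul_odd {k d : ℕ} (hd : Odd d) : padicValNat 2 (2 ^ k * d) = k := by
  rw [padicValNat.mul (by positivity) hd.pos.ne', padicValNat.prime_pow,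
    padicValNat.eq_zero_of_not_dvd hd.not_two_dvd_nat, add_zero]

theorem two_pow_mul_odd_inj {k l d e : ℕ} (hd : Odd d) (he : Odd e)
    (h : 2 ^ k * d = 2 ^ l * e) : k = l ∧ d = e := by
  have hkl : k = l := by
    rw [← padicValNat_two_pow_mul_odd (k := k) hd, h, padicValNat_two_pow_mul_odd he]
  subst hkl
  exact ⟨rfl, Nat.eq_of_mul_eq_mul_left (by positivity) h⟩

namespace TwoComplexity

/-- `OddRepr d m` models the odd part `d` of a number `2 ^ k d` written with `k + m` twos; the
rule `shift` comes from `2 (2 ^ (j + 1) d + 1) = 2 ^ (j + 2) d + 2`, which costs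
`1 + (m + j + 2)` twos. -/
inductive OddRepr : ℕ → ℕ → Prop
  | one : OddRepr 1 0
  | mul {d₁ d₂ m₁ m₂ : ℕ} : OddRepr d₁ m₁ → OddRepr d₂ m₂ → OddRepr (d₁ * d₂) (m₁ + m₂)
  | shift {d m : ℕ} (j : ℕ) : OddRepr d m → OddRepr (2 ^ (j + 1) * d + 1) (m + j + 2)

namespace OddRepr

variable {d m : ℕ}

theorem odd (h : OddRepr d m) : Odd d := by
  induction h with
  | one => exact odd_one
  | mul _ _ ih₁ ih₂ => exact ih₁.mul ih₂
  | shift j _ _ => exact ((even_two.pow_of_ne_zero j.succ_ne_zero).mul_right _).add_one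

theorem le_two_pow (h : OddRepr d m) : d ≤ 2 ^ m := by
  induction h with
  | one => simp
  | mul _ _ ih₁ ih₂ => rw [pow_add]; exact Nat.mul_le_mul ih₁ ih₂
  | @shift d m j _ ih =>
    have : 2 ^ j * d ≤ 2 ^ j * 2 ^ m := Nat.mul_le_mul_left _ ih
    have : 0 < 2 ^ j * 2 ^ m := by positivity
    calc 2 ^ (j + 1) * d + 1 = 2 * (2 ^ j * d) + 1 := by ring
      _ ≤ 4 * (2 ^ j * 2 ^ m) := by omega
      _ = 2 ^ (m + j + 2) := by ring

theorem eq_one_or_three_le (h : OddRepr d m) : d = 1 ∨ 3 ≤ d := by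
  obtain ⟨t, rfl⟩ := h.odd
  omega

theorem four_mul_le (h : OddRepr d m) (hd : 3 ≤ d) : 4 * d ≤ 3 * 2 ^ m := by
  induction h with
  | one => omega
  | @mul d₁ d₂ m₁ m₂ h₁ h₂ ih₁ ih₂ =>
    obtain rfl | hd₁ := h₁.eq_one_or_three_le
    · rw [one_mul] at hd ⊢
      exact (ih₂ hd).trans (by gcongr <;> omega)
    calc 4 * (d₁ * d₂) = 4 * d₁ * d₂ := by ring
      _ ≤ 3 * 2 ^ m₁ * 2 ^ m₂ := Nat.mul_le_mul (ih₁ hd₁) h₂.le_two_pow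
      _ = 3 * 2 ^ (m₁ + m₂) := by ring
  | @shift d m j h _ =>
    have : 2 ^ j * d ≤ 2 ^ j * 2 ^ m := Nat.mul_le_mul_left _ h.le_two_pow
    have : 0 < 2 ^ j * 2 ^ m := by positivity
    calc 4 * (2 ^ (j + 1) * d + 1) = 8 * (2 ^ j * d) + 4 := by ring
      _ ≤ 12 * (2 ^ j * 2 ^ m) := by omega
      _ = 3 * 2 ^ (m + j + 2) := by ring

theorem lt_of_three_mul_two_pow_lt (h : OddRepr d m) (hd : 3 ≤ d) {e : ℕ}
    (he : 3 * 2 ^ e < 4 * d) : e < m :=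
  (Nat.pow_lt_pow_iff_right (by norm_num : 1 < 2)).1 (by have := h.four_mul_le hd; omega)

theorem eight_mul_succ_le (h : OddRepr d m) (hd : 7 ≤ d) : 8 * (d + 1) ≤ 5 * 2 ^ m := by
  induction h with
  | one => omega
  | @mul d₁ d₂ m₁ m₂ h₁ h₂ ih₁ ih₂ =>
    obtain rfl | hd₁ := h₁.eq_one_or_three_le
    · rw [one_mul] at hd ⊢
      exact (ih₂ hd).trans (by gcongr <;> omega)
    obtain rfl | hd₂ := h₂.eq_one_or_three_le
    · rw [mul_one] at hd ⊢
      exact (ih₁ hd).trans (by gcongr <;> omega)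
    have : 9 ≤ d₁ * d₂ := Nat.mul_le_mul hd₁ hd₂
    have : 16 * (d₁ * d₂) ≤ 9 * 2 ^ (m₁ + m₂) := calc
      16 * (d₁ * d₂) = (4 * d₁) * (4 * d₂) := by ring
      _ ≤ (3 * 2 ^ m₁) * (3 * 2 ^ m₂) :=
        Nat.mul_le_mul (h₁.four_mul_le hd₁) (h₂.four_mul_le hd₂)
      _ = 9 * 2 ^ (m₁ + m₂) := by ring
    omega
  | @shift d m j h _ =>
    have hle : 2 ^ j * d ≤ 2 ^ (j + m) := by
      rw [pow_add]; exact Nat.mul_le_mul_left _ h.le_two_pow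
    have h3 : 3 ≤ 2 ^ j * d := by rw [pow_succ] at hd; linarith
    -- a power of two that is at least `3`
    have h4 : 4 ≤ 2 ^ (j + m) := by
      have : 1 < j + m := (Nat.pow_lt_pow_iff_right (by norm_num : 1 < 2)).1 (by omega)
      exact (Nat.pow_le_pow_right (by norm_num) this : 2 ^ 2 ≤ _)
    calc 8 * (2 ^ (j + 1) * d + 1 + 1) = 16 * (2 ^ j * d) + 16 := by ring
      _ ≤ 20 * 2 ^ (j + m) := by omega
      _ = 5 * 2 ^ (m + j + 2) := by ring

/-- A lower bound for the cost of `5 ^ i`, `i ≤ 5`; at `i = 4, 5` it beats `four_mul_le`. -/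
def powFiveBound : ℕ → ℕ
  | 0 => 0
  | 1 => 3
  | 2 => 6
  | 3 => 8
  | 4 => 11
  | _ => 14

theorem powFiveBound_le (h : OddRepr d m) {i : ℕ} (hi : i ≤ 5) (hd : d = 5 ^ i) :
    powFiveBound i ≤ m := by
  induction h generalizing i with
  | one =>
    obtain rfl : i = 0 := by
      simpa using (Nat.pow_eq_one.1 hd.symm)
    rfl
  | @mul d₁ d₂ m₁ m₂ _ _ ih₁ ih₂ =>
    obtain ⟨a, ha, rfl⟩ := (Nat.dvd_prime_pow Nat.prime_five).1 ⟨d₂, hd.symm⟩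
    have hd₂ : d₂ = 5 ^ (i - a) := Nat.eq_of_mul_eq_mul_left (by positivity : 0 < 5 ^ a) <| by
      rw [hd, ← pow_add, Nat.add_sub_cancel' ha]
    have hsub : ∀ i ≤ 5, ∀ a ≤ i, powFiveBound i ≤ powFiveBound a + powFiveBound (i - a) := by
      decide
    have := hsub i hi a ha
    have := ih₁ (ha.trans hi) rfl
    have := ih₂ (by omega) hd₂
    omega
  | @shift d m j h _ =>
    have hpos : 0 < 2 ^ (j + 1) * d := Nat.mul_pos (by positivity) h.odd.pos
    -- read off `j` and `d` from the 2-adic factorization of `5 ^ i - 1`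
    have split {v o : ℕ} (ho : Odd o) (he : 5 ^ i = 2 ^ v * o + 1) : j + 1 = v ∧ d = o :=
      two_pow_mul_odd_inj h.odd ho (by omega)
    interval_cases i
    · omega
    · obtain ⟨hj, rfl⟩ := split (v := 2) (o := 1) (by decide) (by norm_num)
      simp only [powFiveBound]; omega
    · obtain ⟨hj, rfl⟩ := split (v := 3) (o := 3) (by decide) (by norm_num)
      have := h.lt_of_three_mul_two_pow_lt (e := 1) (by norm_num) (by norm_num)
      simp only [powFiveBound]; omega
    · obtain ⟨hj, rfl⟩ := split (v := 2) (o := 31) (by decide) (by norm_num)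
      have := h.lt_of_three_mul_two_pow_lt (e := 5) (by norm_num) (by norm_num)
      simp only [powFiveBound]; omega
    · obtain ⟨hj, rfl⟩ := split (v := 4) (o := 39) (by decide) (by norm_num)
      have := h.lt_of_three_mul_two_pow_lt (e := 5) (by norm_num) (by norm_num)
      simp only [powFiveBound]; omega
    · obtain ⟨hj, rfl⟩ := split (v := 2) (o := 781) (by decide) (by norm_num)
      have := h.lt_of_three_mul_two_pow_lt (e := 10) (by norm_num) (by norm_num)
      simp only [powFiveBound]; omega

end OddRepr

/-- The two alternatives say that `p - log₂ n ≥ log₂ (16 / 5)`, or that `n` is an odd part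
generated by `OddRepr` times a power of two, with total cost at most `p`. -/
def Tame (n p : ℕ) : Prop :=
  16 * n ≤ 5 * 2 ^ p ∨ ∃ k d m, OddRepr d m ∧ n = 2 ^ k * d ∧ k + m ≤ p

namespace Tame

variable {a b n p q : ℕ}

theorem of_oddRepr {k d m : ℕ} (h : OddRepr d m) (hp : k + m ≤ p) : Tame (2 ^ k * d) p :=
  .inr ⟨k, d, m, h, rfl, hp⟩

theorem mono (h : Tame n p) (hpq : p ≤ q) : Tame n q := by
  rcases h with h | ⟨k, d, m, hd, rfl, hp⟩
  · exact .inl (h.trans (by gcongr; omega))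
  · exact of_oddRepr hd (hp.trans hpq)

theorem le_two_pow (h : Tame n p) : n ≤ 2 ^ p := by
  rcases h with h | ⟨k, d, m, hd, rfl, hp⟩
  · omega
  · calc 2 ^ k * d ≤ 2 ^ k * 2 ^ m := Nat.mul_le_mul_left _ hd.le_two_pow
      _ = 2 ^ (k + m) := (pow_add 2 k m).symm
      _ ≤ 2 ^ p := Nat.pow_le_pow_right (by norm_num) hp

theorem add_two (h : Tame a p) (ha : Even a) (ha₂ : 2 ≤ a) : Tame (a + 2) (p + 1) := by
  rcases h with h | ⟨k, d, m, hd, rfl, hp⟩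
  · left; rw [pow_succ]; omega
  rcases k with _ | _ | k
  · exact absurd ha (by simpa using hd.odd)
  · obtain rfl | rfl | rfl | hd₇ : d = 1 ∨ d = 3 ∨ d = 5 ∨ 7 ≤ d := by
      obtain ⟨t, rfl⟩ := hd.odd; omega
    · exact of_oddRepr (k := 2) .one (by omega)
    · have := hd.lt_of_three_mul_two_pow_lt (e := 1) (by norm_num) (by norm_num)
      exact of_oddRepr (k := 3) .one (by omega)
    · have := hd.lt_of_three_mul_two_pow_lt (e := 2) (by norm_num) (by norm_num)
      exact of_oddRepr (k := 2) (.shift 0 .one) (by omega)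
    · left
      have := hd.eight_mul_succ_le hd₇
      have : 2 ^ (m + 2) ≤ 2 ^ (p + 1) := Nat.pow_le_pow_right (by norm_num) (by omega)
      rw [pow_add] at this
      omega
  · rw [show 2 ^ (k + 1 + 1) * d + 2 = 2 ^ 1 * (2 ^ (k + 1) * d + 1) by ring]
    exact of_oddRepr (hd.shift k) (by omega)

theorem add_of_four_lt (ha : a ≤ 2 ^ p) (hb : b ≤ 2 ^ q) (ha₄ : 4 < a) (hb₄ : 4 < b) :
    Tame (a + b) (p + q) := by
  have eight_le {n r : ℕ} (h₄ : 4 < n) (hn : n ≤ 2 ^ r) : 8 ≤ 2 ^ r := by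
    have : 2 < r := (Nat.pow_lt_pow_iff_right (by norm_num : 1 < 2)).1 (by omega)
    exact (Nat.pow_le_pow_right (by norm_num) this : 2 ^ 3 ≤ _)
  have := eight_le ha₄ ha
  have := eight_le hb₄ hb
  left
  rw [pow_add]
  nlinarith

theorem add_of_le_four (h : Tame a p) (ha : Even a) (ha₂ : 2 ≤ a) (hb : Even b) (hb₂ : 2 ≤ b)
    (hb₄ : b ≤ 4) (hq : b ≤ 2 ^ q) : Tame (a + b) (p + q) := by
  obtain rfl | rfl : b = 2 ∨ b = 4 := by obtain ⟨t, rfl⟩ := hb; omega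
  · have : 1 ≤ q := (Nat.pow_le_pow_iff_right (by norm_num : 1 < 2)).1 (by simpa using hq)
    exact (h.add_two ha ha₂).mono (by omega)
  · have : 2 ≤ q := (Nat.pow_le_pow_iff_right (by norm_num : 1 < 2)).1 (by simpa using hq)
    exact ((h.add_two ha ha₂).add_two (ha.add even_two) (by omega)).mono (by omega)

theorem add (ha : Tame a p) (hb : Tame b q) (hae : Even a) (hbe : Even b) (ha₂ : 2 ≤ a)
    (hb₂ : 2 ≤ b) : Tame (a + b) (p + q) := by
  by_cases ha₄ : a ≤ 4
  · rw [add_comm a, add_comm p]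
    exact hb.add_of_le_four hbe hb₂ hae ha₂ ha₄ ha.le_two_pow
  by_cases hb₄ : b ≤ 4
  · exact ha.add_of_le_four hae ha₂ hbe hb₂ hb₄ hb.le_two_pow
  exact add_of_four_lt ha.le_two_pow hb.le_two_pow (by omega) (by omega)

theorem mul (ha : Tame a p) (hb : Tame b q) : Tame (a * b) (p + q) := by
  rcases ha with ha | ⟨k₁, d₁, m₁, hd₁, rfl, hp⟩
  · left
    calc 16 * (a * b) = 16 * a * b := by ring
      _ ≤ 5 * 2 ^ p * 2 ^ q := Nat.mul_le_mul ha hb.le_two_pow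
      _ = 5 * 2 ^ (p + q) := by ring
  rcases hb with hb | ⟨k₂, d₂, m₂, hd₂, rfl, hq⟩
  · left
    calc 16 * (2 ^ k₁ * d₁ * b) = 2 ^ k₁ * d₁ * (16 * b) := by ring
      _ ≤ 2 ^ p * (5 * 2 ^ q) := Nat.mul_le_mul (of_oddRepr hd₁ hp).le_two_pow hb
      _ = 5 * 2 ^ (p + q) := by ring
  rw [show 2 ^ k₁ * d₁ * (2 ^ k₂ * d₂) = 2 ^ (k₁ + k₂) * (d₁ * d₂) by ring]
  exact of_oddRepr (hd₁.mul hd₂) (by omega)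

end Tame

theorem tame_of_canRepr {n p : ℕ} (h : CanRepr 2 n p) : Tame n p := by
  induction h with
  | base => exact Tame.of_oddRepr (k := 1) .one le_rfl
  | add h₁ h₂ ih₁ ih₂ =>
    exact ih₁.add ih₂ (even_iff_two_dvd.2 h₁.dvd) (even_iff_two_dvd.2 h₂.dvd) h₁.le h₂.le
  | mul _ _ ih₁ ih₂ => exact ih₁.mul ih₂

theorem canRepr_two_pow_mul_ten_pow_five (m : ℕ) : CanRepr 2 (2 ^ m * 10 ^ 5) (m + 20) :=
  have ten : CanRepr 2 10 4 := .add .base (.mul .base (.mul .base .base))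
  (ten.pow 4).base_pow_mul m

theorem le_of_canRepr_two_pow_mul_ten_pow_five {m c : ℕ} (h : CanRepr 2 (2 ^ m * 10 ^ 5) c) :
    m + 19 ≤ c := by
  rcases tame_of_canRepr h with h | ⟨k, d, m', hd, heq, hc⟩
  · have : 2 ^ (m + 18) < 2 ^ c := by
      have := Nat.one_le_two_pow (n := m)
      rw [pow_add]; omega
    have := (Nat.pow_lt_pow_iff_right (by norm_num : 1 < 2)).1 this
    omega
  · obtain ⟨rfl, rfl⟩ := two_pow_mul_odd_inj hd.odd (by decide : Odd 3125)
      (heq.symm.trans (by ring) : 2 ^ k * d = 2 ^ (m + 5) * 3125)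
    have := hd.powFiveBound_le (i := 5) le_rfl rfl
    simp only [OddRepr.powFiveBound] at this
    omega

end TwoComplexity

theorem stmt_15 (m : ℕ) :
    m + 19 ≤ complexity 2 (2 ^ m * 10 ^ 5) ∧
      complexity 2 (2 ^ m * 10 ^ 5) ≤ m + 20 :=
  have hrepr := TwoComplexity.canRepr_two_pow_mul_ten_pow_five m
  ⟨le_complexity hrepr fun _ => TwoComplexity.le_of_canRepr_two_pow_mul_ten_pow_five,
    complexity_le hrepr⟩
end

section
/- For integers m = m₁ > m₂ > m₃ ≥ 1, one has ‖2^{m₁} + 2^{m₂} + 2^{m₃}‖₂ = m + 2; that is, the upper bound ‖2^{m₁} + ⋯ + 2^{m_k}‖₂ ≤ m₁ + k − 1 is attained with equality when k = 3. -/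
/-!
A representation of `n` with `p` twos gives `n ≤ 2 ^ p`, strictly unless `n` is a power of two,
and even `2 * n ≤ 2 ^ p` unless `n` has at most two binary digits. The last bound is proved by
induction on the representation; the delicate case is a product of two numbers with two binary
digits each, where the bound fails only for `3 * 2 ^ i * 3 * 2 ^ j = 2 ^ (i + j + 3) + 2 ^ (i + j)`,
which again has two binary digits. As `2 ^ m₁ + 2 ^ m₂ + 2 ^ m₃ > 2 ^ m₁` has three binary digits,
it needs at least `m₁ + 2` twos, and `2 ^ (m₃ - 1) * (2 + 2 ^ (m₂ - m₃) * (2 + 2 ^ (m₁ - m₂ + 1)))`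
uses exactly that many.
-/

def IsSumTwoPow (n : ℕ) : Prop := ∃ x y, y < x ∧ n = 2 ^ x + 2 ^ y

theorem Nat.bitIndices_two_pow_add_two_pow {x y : ℕ} (hyx : y < x) :
    (2 ^ x + 2 ^ y).bitIndices = [y, x] := by
  rw [show 2 ^ x + 2 ^ y = ([y, x].map (2 ^ ·)).sum by simp [add_comm]]
  exact Nat.bitIndices_sum_map_two_pow (by simpa [List.sortedLT_iff_pairwise])

theorem Nat.bitIndices_two_pow_add_two_pow_add_two_pow {m₁ m₂ m₃ : ℕ} (h12 : m₂ < m₁)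
    (h23 : m₃ < m₂) : (2 ^ m₁ + 2 ^ m₂ + 2 ^ m₃).bitIndices = [m₃, m₂, m₁] := by
  rw [show 2 ^ m₁ + 2 ^ m₂ + 2 ^ m₃ = ([m₃, m₂, m₁].map (2 ^ ·)).sum by simp; ring]
  exact Nat.bitIndices_sum_map_two_pow (by simp [List.sortedLT_iff_pairwise]; omega)

theorem Nat.isPowerOfTwo_mul {a b : ℕ} (ha : a.isPowerOfTwo) (hb : b.isPowerOfTwo) :
    (a * b).isPowerOfTwo := by
  obtain ⟨k, rfl⟩ := ha
  obtain ⟨j, rfl⟩ := hb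
  exact ⟨k + j, (pow_add 2 k j).symm⟩

namespace IsSumTwoPow

variable {a b : ℕ}

theorem not_isPowerOfTwo (ha : IsSumTwoPow a) : ¬ a.isPowerOfTwo := by
  rintro ⟨k, hk⟩
  obtain ⟨x, y, hyx, rfl⟩ := ha
  simpa [Nat.bitIndices_two_pow_add_two_pow hyx] using congrArg Nat.bitIndices hk

theorem isPowerOfTwo_mul (ha : a.isPowerOfTwo) (hb : IsSumTwoPow b) : IsSumTwoPow (a * b) := by
  obtain ⟨k, rfl⟩ := ha
  obtain ⟨x, y, hyx, rfl⟩ := hb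
  exact ⟨k + x, k + y, by omega, by ring⟩

theorem mul_isPowerOfTwo (ha : IsSumTwoPow a) (hb : b.isPowerOfTwo) : IsSumTwoPow (a * b) :=
  mul_comm b a ▸ isPowerOfTwo_mul hb ha

theorem two_mul_mul_le {x y u v : ℕ} (hyx : y < x) (hvu : v < u)
    (h : ¬ IsSumTwoPow ((2 ^ x + 2 ^ y) * (2 ^ u + 2 ^ v))) :
    2 * ((2 ^ x + 2 ^ y) * (2 ^ u + 2 ^ v)) ≤ 2 ^ (x + 1) * 2 ^ (u + 1) := by
  have three_halves {x y : ℕ} (hyx : y < x) : 2 * (2 ^ x + 2 ^ y) ≤ 3 * 2 ^ x := by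
    have : 2 ^ (y + 1) ≤ 2 ^ x := Nat.pow_le_pow_right two_pos hyx
    rw [pow_succ] at this
    omega
  have five_quarters {x y : ℕ} (hyx : y + 1 < x) : 4 * (2 ^ x + 2 ^ y) ≤ 5 * 2 ^ x := by
    have : 2 ^ (y + 2) ≤ 2 ^ x := Nat.pow_le_pow_right two_pos hyx
    rw [pow_add] at this
    omega
  have key : 8 * ((2 ^ x + 2 ^ y) * (2 ^ u + 2 ^ v)) ≤ 15 * (2 ^ x * 2 ^ u) := by
    obtain rfl | hyx' : x = y + 1 ∨ y + 1 < x := by omega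
    · obtain rfl | hvu' : u = v + 1 ∨ v + 1 < u := by omega
      · exact absurd ⟨y + v + 3, y + v, by omega, by ring⟩ h
      · calc _ = (2 * (2 ^ (y + 1) + 2 ^ y)) * (4 * (2 ^ u + 2 ^ v)) := by ring
          _ ≤ (3 * 2 ^ (y + 1)) * (5 * 2 ^ u) :=
            Nat.mul_le_mul (three_halves hyx) (five_quarters hvu')
          _ = _ := by ring
    · calc _ = (4 * (2 ^ x + 2 ^ y)) * (2 * (2 ^ u + 2 ^ v)) := by ring
        _ ≤ (5 * 2 ^ x) * (3 * 2 ^ u) := Nat.mul_le_mul (five_quarters hyx') (three_halves hvu)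
        _ = _ := by ring
  calc _ ≤ 4 * (2 ^ x * 2 ^ u) := by omega
    _ = 2 ^ (x + 1) * 2 ^ (u + 1) := by ring

end IsSumTwoPow

namespace CanRepr

variable {l n p : ℕ}

theorem pos (h : CanRepr l n p) : 0 < p := by
  induction h <;> omega

theorem le_s17 (h : CanRepr l n p) : l ≤ n := by
  induction h with
  | base => rfl
  | add _ _ iha _ => omega
  | mul _ _ iha ihb => exact (Nat.le_mul_self l).trans (Nat.mul_le_mul iha ihb)

theorem dvd_s17 (h : CanRepr l n p) : l ∣ n := by
  induction h with
  | base => rfl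
  | add _ _ iha ihb => exact dvd_add iha ihb
  | mul _ _ iha _ => exact iha.mul_right _

theorem le_pow (hl : 2 ≤ l) (h : CanRepr l n p) : n ≤ l ^ p := by
  induction h with
  | base => simp
  | @add a b q r ha hb iha ihb =>
    have hq : 2 ≤ l ^ q := hl.trans (Nat.le_self_pow ha.pos.ne' l)
    have hr : 2 ≤ l ^ r := hl.trans (Nat.le_self_pow hb.pos.ne' l)
    calc a + b ≤ l ^ q + l ^ r := add_le_add iha ihb
      _ ≤ l ^ q * l ^ r := Nat.add_le_mul hq hr
      _ = l ^ (q + r) := (pow_add l q r).symm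
  | mul _ _ iha ihb => rw [pow_add]; exact Nat.mul_le_mul iha ihb

theorem lt_pow (hl : 2 ≤ l) (h : CanRepr l n p) (hn : ¬ ∃ k, n = l ^ k) : n < l ^ p :=
  (h.le_pow hl).lt_of_ne fun e => hn ⟨p, e⟩

theorem pow_mul {a : ℕ} (h : CanRepr l a p) : ∀ k, CanRepr l (l ^ k * a) (p + k)
  | 0 => by simpa
  | k + 1 => by convert base.mul (h.pow_mul k) using 1 <;> ring

theorem two_pow_succ_le_of_isSumTwoPow {x y : ℕ} (h : CanRepr 2 (2 ^ x + 2 ^ y) p)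
    (hyx : y < x) : 2 ^ (x + 1) ≤ 2 ^ p := by
  have hlt := h.lt_pow le_rfl (IsSumTwoPow.not_isPowerOfTwo ⟨x, y, hyx, rfl⟩)
  have : 2 ^ x < 2 ^ p := (Nat.le_add_right _ _).trans_lt hlt
  exact Nat.pow_le_pow_right two_pos ((Nat.pow_lt_pow_iff_right one_lt_two).mp this)

theorem two_mul_add_le {a b q r : ℕ} (ha : CanRepr 2 a q) (hb : CanRepr 2 b r) (hrq : r ≤ q)
    (h₁ : ¬ (a + b).isPowerOfTwo) (h₂ : ¬ IsSumTwoPow (a + b)) : 2 * (a + b) ≤ 2 ^ (q + r) := by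
  have haq := ha.le_pow le_rfl
  have hbr := hb.le_pow le_rfl
  rw [pow_add]
  obtain rfl | hr : r = 1 ∨ 2 ≤ r := by have := hb.pos; omega
  · have hb2 : b = 2 := le_antisymm (by simpa using hbr) hb.le_s17
    subst hb2
    rcases haq.eq_or_lt with rfl | hlt
    · obtain rfl | hq : q = 1 ∨ 1 < q := by have := ha.pos; omega
      · exact absurd ⟨2, rfl⟩ h₁
      · exact absurd ⟨q, 1, hq, rfl⟩ h₂
    · have : 2 ∣ 2 ^ q := dvd_pow_self 2 ha.pos.ne'
      have := ha.dvd_s17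
      omega
  · have hq4 : 2 ^ 2 ≤ 2 ^ q := Nat.pow_le_pow_right two_pos (by omega)
    have hr4 : 2 ^ 2 ≤ 2 ^ r := Nat.pow_le_pow_right two_pos hr
    nlinarith

theorem two_mul_le_two_pow (h : CanRepr 2 n p) (h₁ : ¬ n.isPowerOfTwo)
    (h₂ : ¬ IsSumTwoPow n) : 2 * n ≤ 2 ^ p := by
  induction h with
  | base => exact absurd ⟨1, rfl⟩ h₁
  | @add a b q r ha hb _ _ =>
    rcases le_total r q with hrq | hqr
    · exact two_mul_add_le ha hb hrq h₁ h₂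
    · rw [add_comm a, add_comm q] at *
      exact two_mul_add_le hb ha hqr h₁ h₂
  | @mul a b q r ha hb iha ihb =>
    rw [pow_add]
    by_cases hA : a.isPowerOfTwo ∨ IsSumTwoPow a
    · by_cases hB : b.isPowerOfTwo ∨ IsSumTwoPow b
      · rcases hA with hA | hA <;> rcases hB with hB | hB
        · exact absurd (Nat.isPowerOfTwo_mul hA hB) h₁
        · exact absurd (IsSumTwoPow.isPowerOfTwo_mul hA hB) h₂
        · exact absurd (hA.mul_isPowerOfTwo hB) h₂
        · obtain ⟨x, y, hyx, rfl⟩ := hA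
          obtain ⟨u, v, hvu, rfl⟩ := hB
          calc _ ≤ 2 ^ (x + 1) * 2 ^ (u + 1) := IsSumTwoPow.two_mul_mul_le hyx hvu h₂
            _ ≤ 2 ^ q * 2 ^ r := Nat.mul_le_mul (ha.two_pow_succ_le_of_isSumTwoPow hyx)
                (hb.two_pow_succ_le_of_isSumTwoPow hvu)
      · obtain ⟨hB₁, hB₂⟩ := not_or.mp hB
        calc 2 * (a * b) = a * (2 * b) := by ring
          _ ≤ 2 ^ q * 2 ^ r := Nat.mul_le_mul (ha.le_pow le_rfl) (ihb hB₁ hB₂)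
    · obtain ⟨hA₁, hA₂⟩ := not_or.mp hA
      calc 2 * (a * b) = (2 * a) * b := by ring
        _ ≤ 2 ^ q * 2 ^ r := Nat.mul_le_mul (iha hA₁ hA₂) (hb.le_pow le_rfl)

end CanRepr

theorem canRepr_two_pow_add_two_pow_add_two_pow {m₁ m₂ m₃ : ℕ} (h12 : m₂ < m₁) (h23 : m₃ < m₂)
    (h3 : 1 ≤ m₃) : CanRepr 2 (2 ^ m₁ + 2 ^ m₂ + 2 ^ m₃) (m₁ + 2) := by
  obtain ⟨d₁, rfl⟩ := Nat.exists_eq_add_of_lt h12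
  obtain ⟨d₂, rfl⟩ := Nat.exists_eq_add_of_lt h23
  obtain ⟨e, rfl⟩ := Nat.exists_eq_add_of_le' h3
  have inner := CanRepr.base.add ((CanRepr.base (l := 2)).pow_mul (d₁ + 1))
  have outer := (CanRepr.base.add (inner.pow_mul (d₂ + 1))).pow_mul e
  convert outer using 1 <;> ring

theorem CanRepr.add_two_le_of_two_pow_add_two_pow_add_two_pow {m₁ m₂ m₃ p : ℕ} (h12 : m₂ < m₁)
    (h23 : m₃ < m₂) (h : CanRepr 2 (2 ^ m₁ + 2 ^ m₂ + 2 ^ m₃) p) : m₁ + 2 ≤ p := by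
  have hbits := Nat.bitIndices_two_pow_add_two_pow_add_two_pow h12 h23
  have h₁ : ¬ (2 ^ m₁ + 2 ^ m₂ + 2 ^ m₃).isPowerOfTwo := by
    rintro ⟨k, hk⟩
    simp [hk] at hbits
  have h₂ : ¬ IsSumTwoPow (2 ^ m₁ + 2 ^ m₂ + 2 ^ m₃) := by
    rintro ⟨x, y, hyx, hxy⟩
    simp [hxy, Nat.bitIndices_two_pow_add_two_pow hyx] at hbits
  have hle := h.two_mul_le_two_pow h₁ h₂
  have hlt : 2 ^ (m₁ + 1) < 2 ^ p := by
    rw [pow_succ]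
    have := Nat.two_pow_pos m₂
    have := Nat.two_pow_pos m₃
    omega
  exact (Nat.pow_lt_pow_iff_right one_lt_two).mp hlt

theorem stmt_17 (m₁ m₂ m₃ : ℕ) (h12 : m₂ < m₁) (h23 : m₃ < m₂) (h3 : 1 ≤ m₃) :
    complexity 2 (2 ^ m₁ + 2 ^ m₂ + 2 ^ m₃) = m₁ + 2 :=
  IsLeast.csInf_eq ⟨canRepr_two_pow_add_two_pow_add_two_pow h12 h23 h3,
    fun _ hp => hp.add_two_le_of_two_pow_add_two_pow_add_two_pow h12 h23⟩
end
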